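/- arXiv:0712.3953 — 10 statements merged into one kernel-verified Lean document; each statement's English description precedes it below -/
import Mathlib

section
/- If R̂ is a rime matrix on V⊗V (V of dimension n ≥ 2) with entries R̂^{ij}_{kl} = α_{ij}δ^i_l δ^j_k + β_{ij}δ^i_k δ^j_l + γ_{ij}δ^i_k δ^i_l + γ'_{ij}δ^j_k δ^j_l (no summation, with β_{ii}=γ_{ii}=γ'_{ii}=0), is invertible, is strict (α_{ij}γ_{ij} ≠ 0 for all i ≠ j), and satisfies the Yang–Baxter equation (R̂⊗1)(1⊗R̂)(R̂⊗1) = (1⊗R̂)(R̂⊗1)(1⊗R̂), then the quantity β_{ij} + β_{ji} is the same for all pairs of distinct indices i, j. -/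
open Matrix Kronecker BigOperators Finset

noncomputable section

/-- The rime matrix R̂ on ℂⁿ⊗ℂⁿ with parameters `b i j = β_{ij}` (form (3) of the paper):
`R̂^{ij}_{kl} = (1-b_{ji})δ^i_l δ^j_k + b_{ij}δ^i_k δ^j_l - b_{ij}δ^i_k δ^i_l + b_{ji}δ^j_k δ^j_l`.
Row index `p = (i,j)` (upper indices), column index `q = (k,l)` (lower indices). -/
def rimeR (n : ℕ) (b : Fin n → Fin n → ℂ) :
    Matrix (Fin n × Fin n) (Fin n × Fin n) ℂ := fun p q =>
  (1 - b p.2 p.1) * (if p.1 = q.2 then 1 else 0) * (if p.2 = q.1 then 1 else 0)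
  + b p.1 p.2 * (if p.1 = q.1 then 1 else 0) * (if p.2 = q.2 then 1 else 0)
  - b p.1 p.2 * (if p.1 = q.1 then 1 else 0) * (if p.1 = q.2 then 1 else 0)
  + b p.2 p.1 * (if p.2 = q.1 then 1 else 0) * (if p.2 = q.2 then 1 else 0)

/-- `β_{ij} = β φ_i / (φ_i - φ_j)` for `i ≠ j`, and `β_{ii} = 0`. -/
def bphi (n : ℕ) (β : ℂ) (φ : Fin n → ℂ) : Fin n → Fin n → ℂ := fun i j =>
  if i = j then 0 else β * φ i / (φ i - φ j)

/-- `r ⊗ 1` acting on the first two factors of ℂⁿ⊗ℂⁿ⊗ℂⁿ. -/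
def op12 (n : ℕ) (r : Matrix (Fin n × Fin n) (Fin n × Fin n) ℂ) :
    Matrix (Fin n × Fin n × Fin n) (Fin n × Fin n × Fin n) ℂ := fun p q =>
  r (p.1, p.2.1) (q.1, q.2.1) * (if p.2.2 = q.2.2 then 1 else 0)

/-- `1 ⊗ r` acting on the last two factors of ℂⁿ⊗ℂⁿ⊗ℂⁿ. -/
def op23 (n : ℕ) (r : Matrix (Fin n × Fin n) (Fin n × Fin n) ℂ) :
    Matrix (Fin n × Fin n × Fin n) (Fin n × Fin n × Fin n) ℂ := fun p q =>
  r p.2 q.2 * (if p.1 = q.1 then 1 else 0)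

/-- `r` acting on the first and third factors of ℂⁿ⊗ℂⁿ⊗ℂⁿ. -/
def op13 (n : ℕ) (r : Matrix (Fin n × Fin n) (Fin n × Fin n) ℂ) :
    Matrix (Fin n × Fin n × Fin n) (Fin n × Fin n × Fin n) ℂ := fun p q =>
  r (p.1, p.2.2) (q.1, q.2.2) * (if p.2.1 = q.2.1 then 1 else 0)

/-- A general rime matrix with parameters α, β, γ, γ' (formula (1) of the paper):
`R̂^{ij}_{kl} = α_{ij}δ^i_l δ^j_k + β_{ij}δ^i_k δ^j_l + γ_{ij}δ^i_k δ^i_l + γ'_{ij}δ^j_k δ^j_l`. -/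
def rimeGen (n : ℕ) (α β γ γ' : Fin n → Fin n → ℂ) :
    Matrix (Fin n × Fin n) (Fin n × Fin n) ℂ := fun p q =>
  α p.1 p.2 * (if p.1 = q.2 then 1 else 0) * (if p.2 = q.1 then 1 else 0)
  + β p.1 p.2 * (if p.1 = q.1 then 1 else 0) * (if p.2 = q.2 then 1 else 0)
  + γ p.1 p.2 * (if p.1 = q.1 then 1 else 0) * (if p.1 = q.2 then 1 else 0)
  + γ' p.1 p.2 * (if p.2 = q.1 then 1 else 0) * (if p.2 = q.2 then 1 else 0)

set_option maxHeartbeats 4000000 in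
/-- For a strict invertible rime solution of the Yang–Baxter equation,
`β_{ij} + β_{ji}` does not depend on the pair of distinct indices `i ≠ j`. -/
theorem rime_beta_sum_constant (n : ℕ) (hn : 2 ≤ n) (α β γ γ' : Fin n → Fin n → ℂ)
    (hβ : ∀ i, β i i = 0) (hγ : ∀ i, γ i i = 0) (hγ' : ∀ i, γ' i i = 0)
    (hinv : IsUnit (rimeGen n α β γ γ'))
    (hstrict : ∀ i j, i ≠ j → α i j * γ i j ≠ 0)
    (hYB : op12 n (rimeGen n α β γ γ') * op23 n (rimeGen n α β γ γ') *
             op12 n (rimeGen n α β γ γ')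
         = op23 n (rimeGen n α β γ γ') * op12 n (rimeGen n α β γ γ') *
             op23 n (rimeGen n α β γ γ')) :
    ∀ i j k l : Fin n, i ≠ j → k ≠ l → β i j + β j i = β k l + β l k := by
  have ha : ∀ p q : Fin n, p ≠ q → α p q ≠ 0 := by
    intro p q h hh; exact hstrict p q h (by rw [hh, zero_mul])
  have hc : ∀ p q : Fin n, p ≠ q → γ p q ≠ 0 := by
    intro p q h hh; exact hstrict p q h (by rw [hh, mul_zero])
  -- γ'_{pq} = -γ_{qp}
  have key1 : ∀ p q : Fin n, p ≠ q → γ' p q = - γ q p := by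
    intro p q hpq
    have h1 := congrFun (congrFun hYB (p,q,q)) (q,q,p)
    simp only [Matrix.mul_apply, op12, op23, rimeGen, Fintype.sum_prod_type] at h1
    simp only [mul_ite, ite_mul, mul_one, one_mul, mul_zero, zero_mul, add_mul, mul_add,
      Finset.sum_add_distrib, Finset.sum_ite_eq, Finset.sum_ite_eq', Finset.mem_univ, if_true,
      Finset.sum_ite_irrel, Finset.sum_const_zero, hpq, hpq.symm, hβ, hγ, hγ',
      if_false, ite_false, ite_true] at h1
    have h2 : α p q * γ p q * (γ q p + γ' p q) = 0 := by linear_combination h1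
    rcases mul_eq_zero.mp h2 with h | h
    · exact absurd h (hstrict p q hpq)
    · linear_combination h
  -- α_{qp} + β_{pq} = α_{qq}
  have key2 : ∀ p q : Fin n, p ≠ q → α q p + β p q = α q q := by
    intro p q hpq
    have h1 := congrFun (congrFun hYB (p,q,q)) (p,q,p)
    simp only [Matrix.mul_apply, op12, op23, rimeGen, Fintype.sum_prod_type] at h1
    simp only [mul_ite, ite_mul, mul_one, one_mul, mul_zero, zero_mul, add_mul, mul_add,
      Finset.sum_add_distrib, Finset.sum_ite_eq, Finset.sum_ite_eq', Finset.mem_univ, if_true,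
      Finset.sum_ite_irrel, Finset.sum_const_zero, hpq, hpq.symm, hβ, hγ, hγ',
      if_false, ite_false, ite_true] at h1
    have h2 : α p q * γ p q * (α q p + β p q - α q q) = 0 := by linear_combination h1
    rcases mul_eq_zero.mp h2 with h | h
    · exact absurd h (hstrict p q hpq)
    · linear_combination h
  -- α_{pq} + β_{qp} = α_{qq}
  have key3 : ∀ p q : Fin n, p ≠ q → α p q + β q p = α q q := by
    intro p q hpq
    have h1 := congrFun (congrFun hYB (p,q,q)) (q,p,p)
    simp only [Matrix.mul_apply, op12, op23, rimeGen, Fintype.sum_prod_type] at h1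
    simp only [mul_ite, ite_mul, mul_one, one_mul, mul_zero, zero_mul, add_mul, mul_add,
      Finset.sum_add_distrib, Finset.sum_ite_eq, Finset.sum_ite_eq', Finset.mem_univ, if_true,
      Finset.sum_ite_irrel, Finset.sum_const_zero, hpq, hpq.symm, hβ, hγ, hγ',
      if_false, ite_false, ite_true] at h1
    have h2 : α p q * γ p q * (α p q + β q p - α q q) = 0 := by linear_combination h1
    rcases mul_eq_zero.mp h2 with h | h
    · exact absurd h (hstrict p q hpq)
    · linear_combination h
  -- α_{qr} + β_{pq} = β_{qr} + α_{pq}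
  have key5 : ∀ p q r : Fin n, p ≠ q → q ≠ r → p ≠ r →
      α q r + β p q = β q r + α p q := by
    intro p q r hpq hqr hpr
    have h1 := congrFun (congrFun hYB (p,q,r)) (q,q,q)
    simp only [Matrix.mul_apply, op12, op23, rimeGen, Fintype.sum_prod_type] at h1
    simp only [mul_ite, ite_mul, mul_one, one_mul, mul_zero, zero_mul, add_mul, mul_add,
      Finset.sum_add_distrib, Finset.sum_ite_eq, Finset.sum_ite_eq', Finset.mem_univ, if_true,
      Finset.sum_ite_irrel, Finset.sum_const_zero, hpq, hpq.symm, hqr, hqr.symm, hpr, hpr.symm,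
      hβ, hγ, hγ', if_false, ite_false, ite_true] at h1
    have h2 : γ' p q * γ q r * (α q r + β p q - β q r - α p q) = 0 := by linear_combination h1
    have hg' : γ' p q ≠ 0 := by
      rw [key1 p q hpq]
      exact neg_ne_zero.mpr (hc q p hpq.symm)
    rcases mul_eq_zero.mp h2 with h | h
    · rcases mul_eq_zero.mp h with h' | h'
      · exact absurd h' hg'
      · exact absurd h' (hc q r hqr)
    · linear_combination h
  have tconst : ∀ p q : Fin n, p ≠ q → α p p = α q q := by
    intro p q hpq
    have e1 := key3 p q hpq
    have e2 := key2 q p hpq.symm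
    linear_combination e1 - e2
  have step : ∀ p q r : Fin n, p ≠ q → q ≠ r → p ≠ r →
      β p q + β q p = β q r + β r q := by
    intro p q r hpq hqr hpr
    have e2 := key3 p q hpq
    have e4 := key3 q r hqr
    have e5 := key5 p q r hpq hqr hpr
    have e6 := tconst q r hqr
    linear_combination e2 - e4 + e5 + e6
  intro i j k l hij hkl
  by_cases h1 : j = k
  · subst h1
    by_cases h2 : i = l
    · subst h2; ring
    · exact step i j l hij hkl h2
  · by_cases h2 : i = k
    · subst h2
      by_cases h3 : j = l
      · subst h3; rfl
      · have := step j i l (Ne.symm hij) hkl h3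
        linear_combination this
    · by_cases h3 : j = l
      · subst h3
        have := step i j k hij h1 h2
        linear_combination this
      · calc β i j + β j i = β j k + β k j := step i j k hij h1 h2
          _ = β k l + β l k := step j k l h1 hkl h3
end
end

section
/- For any n ≥ 2 and any β ∈ ℂ, the operator R̂ on ℂ^n ⊗ ℂ^n with entries R̂^{ij}_{kl} = (1-β_{ji})δ^i_l δ^j_k + β_{ij}δ^i_k δ^j_l - β_{ij}δ^i_k δ^i_l + β_{ji}δ^j_k δ^j_l (where β_{ii}=0) satisfies the Hecke relation R̂² = β R̂ + (1-β) Id, for arbitrary off-diagonal parameters β_{ij}. -/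
open Matrix Kronecker BigOperators Finset

noncomputable section

/- Every coordinate of `R̂ g` involves only `g` at `(i,j)`, `(j,i)` and the diagonal, and the
diagonal is fixed by `R̂`; on the two-dimensional block `(i,j), (j,i)` with `i ≠ j` the relation
reduces to a polynomial identity once `b j i = β - b i j`. -/

lemma rimeR_mulVec_apply (n : ℕ) (b : Fin n → Fin n → ℂ) (g : Fin n × Fin n → ℂ) (i j : Fin n) :
    (rimeR n b *ᵥ g) (i, j)
      = (1 - b j i) * g (j, i) + b i j * g (i, j) - b i j * g (i, i) + b j i * g (j, j) := by
  simp only [mulVec, dotProduct, rimeR, Fintype.sum_prod_type]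
  simp [ite_mul, mul_ite, add_mul, sub_mul, Finset.sum_add_distrib, Finset.sum_sub_distrib]

lemma rimeR_mulVec_apply_diag (n : ℕ) (b : Fin n → Fin n → ℂ) (hdiag : ∀ i, b i i = 0)
    (g : Fin n × Fin n → ℂ) (i : Fin n) : (rimeR n b *ᵥ g) (i, i) = g (i, i) := by
  rw [rimeR_mulVec_apply, hdiag]
  ring

lemma rimeR_mulVec_mulVec (n : ℕ) (β : ℂ) (b : Fin n → Fin n → ℂ)
    (hdiag : ∀ i, b i i = 0) (hsum : ∀ i j, i ≠ j → b i j + b j i = β) (g : Fin n × Fin n → ℂ) :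
    rimeR n b *ᵥ (rimeR n b *ᵥ g) = β • (rimeR n b *ᵥ g) + (1 - β) • g := by
  ext ⟨i, j⟩
  simp only [Pi.add_apply, Pi.smul_apply, smul_eq_mul]
  by_cases hij : i = j
  · subst hij
    rw [rimeR_mulVec_apply_diag n b hdiag, rimeR_mulVec_apply_diag n b hdiag]
    ring
  · have hji : b j i = β - b i j := by linear_combination hsum i j hij
    rw [rimeR_mulVec_apply, rimeR_mulVec_apply_diag n b hdiag, rimeR_mulVec_apply_diag n b hdiag,
      rimeR_mulVec_apply, rimeR_mulVec_apply, hji]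
    ring

theorem rime_hecke_general (n : ℕ) (β : ℂ) (b : Fin n → Fin n → ℂ)
    (hdiag : ∀ i, b i i = 0) (hsum : ∀ i j, i ≠ j → b i j + b j i = β) :
    rimeR n b * rimeR n b = β • rimeR n b + (1 - β) • (1 : Matrix (Fin n × Fin n) (Fin n × Fin n) ℂ) := by
  refine ext_iff_mulVec.mpr fun g => ?_
  rw [← mulVec_mulVec, rimeR_mulVec_mulVec n β b hdiag hsum, add_mulVec, smul_mulVec,
    smul_mulVec, one_mulVec]

/-- The rime matrix (3) satisfies the Hecke relation `R̂² = β R̂ + (1-β) Id`,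
for arbitrary off-diagonal parameters `b i j = β_{ij}` with constant `β_{ij}+β_{ji} = β`. -/
theorem rime_hecke (n : ℕ) (hn : 2 ≤ n) (β : ℂ) (b : Fin n → Fin n → ℂ)
    (hdiag : ∀ i, b i i = 0) (hsum : ∀ i j, i ≠ j → b i j + b j i = β) :
    rimeR n b * rimeR n b = β • rimeR n b + (1 - β) • (1 : Matrix (Fin n × Fin n) (Fin n × Fin n) ℂ) :=
  rime_hecke_general n β b hdiag hsum
end
end

section
/- Let φ_1,...,φ_n ∈ ℂ and define the n×n matrix X(φ) by X^k_j = e_{j-1}(φ_1,...,φ̂_k,...,φ_n), the (j-1)-st elementary symmetric polynomial in the variables φ_1,...,φ_n with φ_k omitted. Then det X(φ) = ∏_{j<k} (φ_j - φ_k). -/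
/-!
Dividing `∏ i (1 + φ i t)` by `1 + φ k t` gives
`e_j(φ with φ k omitted) = ∑_{r ≤ j} (-φ k)^r e_{j-r}(φ)`. Hence `X(φ)` factors as the
Vandermonde matrix of `-φ` times the upper unitriangular Toeplitz matrix of the `e_m(φ)`, and
`det X(φ) = det V(-φ) = ∏_{i<j} (φ i - φ j)`.
-/

open Matrix BigOperators Finset

noncomputable section

/-- The matrix `X(φ)` with entries `X^k_j = e_{j-1}(φ_1, …, φ̂_k, …, φ_n)`: row `k`, column `j`
(0-indexed here, so column `j` carries the elementary symmetric polynomial of degree `j`)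
in the `n-1` values `φ` with the `k`-th one omitted. -/
def Xmat (n : ℕ) (φ : Fin n → ℂ) : Matrix (Fin n) (Fin n) ℂ := fun k j =>
  (((Finset.univ.erase k).val.map φ).esymm (j : ℕ))

namespace Multiset

theorem esymm_cons_succ {R : Type*} [CommSemiring R] (a : R) (s : Multiset R) (j : ℕ) :
    (a ::ₘ s).esymm (j + 1) = s.esymm (j + 1) + a * s.esymm j := by
  simp [esymm, powersetCard_cons, map_map, prod_cons, sum_map_mul_left]

theorem esymm_eq_sum_esymm_cons {R : Type*} [CommRing R] (a : R) (s : Multiset R) (j : ℕ) :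
    s.esymm j = ∑ r ∈ Finset.range (j + 1), (-a) ^ r * (a ::ₘ s).esymm (j - r) := by
  induction j with
  | zero => simp [esymm]
  | succ j ih =>
    rw [sum_range_succ', pow_zero, one_mul, Nat.sub_zero, esymm_cons_succ, ih, mul_sum,
      add_left_comm, ← sum_add_distrib,
      Finset.sum_eq_zero fun r _ => by rw [Nat.add_sub_add_right]; ring, add_zero]

end Multiset

theorem Fin.sum_ite_le_eq_sum_range {M : Type*} [AddCommMonoid M] {n : ℕ} (j : Fin n)
    (f : ℕ → M) : ∑ s : Fin n, (if s ≤ j then f s else 0) = ∑ r ∈ range (j + 1), f r := by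
  simp only [Fin.le_iff_val_le_val]
  rw [Fin.sum_univ_eq_sum_range (fun r => if r ≤ (j : ℕ) then f r else 0), ← sum_filter]
  congr 1
  ext r
  simp only [mem_filter, mem_range]
  omega

theorem Finset.prod_filter_lt_eq_prod_prod_Ioi {α M : Type*} [Fintype α] [LinearOrder α]
    [LocallyFiniteOrderTop α] [CommMonoid M] (f : α → α → M) :
    ∏ p ∈ univ.filter (fun p : α × α => p.1 < p.2), f p.1 p.2 = ∏ i, ∏ j ∈ Ioi i, f i j := by
  rw [prod_sigma']
  exact prod_nbij' (fun p => ⟨p.1, p.2⟩) (fun p => (p.1, p.2)) (by simp) (by simp) (by simp)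
    (by simp) (by simp)

section

variable {R : Type*} [CommRing R] {n : ℕ}

def esymmEraseMatrix (φ : Fin n → R) : Matrix (Fin n) (Fin n) R :=
  of fun k j => ((univ.erase k).val.map φ).esymm j

def esymmToeplitz (φ : Fin n → R) : Matrix (Fin n) (Fin n) R :=
  of fun s j => if s ≤ j then (univ.val.map φ).esymm (j - s) else 0

theorem det_esymmToeplitz (φ : Fin n → R) : (esymmToeplitz φ).det = 1 := by
  rw [det_of_isUpperTriangular]
  · simp [esymmToeplitz, Multiset.esymm]
  · intro s j hjs
    exact if_neg (not_le.mpr hjs)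

theorem esymmEraseMatrix_eq_vandermonde_mul (φ : Fin n → R) :
    esymmEraseMatrix φ = vandermonde (-φ) * esymmToeplitz φ := by
  ext k j
  have hcons : univ.val.map φ = φ k ::ₘ (univ.erase k).val.map φ := by
    rw [erase_val, ← Multiset.map_cons, Multiset.cons_erase (mem_univ k)]
  simp only [esymmEraseMatrix, esymmToeplitz, mul_apply, vandermonde_apply, of_apply,
    Pi.neg_apply, mul_ite, mul_zero, hcons]
  exact (Multiset.esymm_eq_sum_esymm_cons _ _ _).trans (Fin.sum_ite_le_eq_sum_range j _).symm

theorem det_esymmEraseMatrix (φ : Fin n → R) :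
    (esymmEraseMatrix φ).det = ∏ i, ∏ j ∈ Ioi i, (φ i - φ j) := by
  simp only [esymmEraseMatrix_eq_vandermonde_mul, det_mul, det_esymmToeplitz, mul_one,
    det_vandermonde, Pi.neg_apply, neg_sub_neg]

end

/-- `det X(φ) = ∏_{j<k} (φ_j - φ_k)`. -/
theorem det_Xmat (n : ℕ) (φ : Fin n → ℂ) :
    (Xmat n φ).det
      = ∏ p ∈ Finset.univ.filter (fun p : Fin n × Fin n => p.1 < p.2), (φ p.1 - φ p.2) := by
  rw [prod_filter_lt_eq_prod_prod_Ioi fun i j => φ i - φ j]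
  exact det_esymmEraseMatrix φ
end
end

section
/- Let μ_1,...,μ_n ∈ ℂ be pairwise distinct, Z^i_j := e^i_j - e^j_j (elementary matrix notation), and r_0 := Σ_{i<j} (1/(μ_i-μ_j)) (Z^i_j ⊗ Z^j_i - Z^j_i ⊗ Z^i_j) acting on ℂ^n⊗ℂ^n. Then r_0² = 0. -/
open Matrix Kronecker BigOperators Finset

noncomputable section


/-- `Z^i_j = e^i_j - e^j_j`. -/
def Zmat (n : ℕ) (i j : Fin n) : Matrix (Fin n) (Fin n) ℂ :=
  single i j 1 - single j j 1

/-- The skew-symmetric rime r-matrix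
`r₀ = Σ_{i<j} (μ_i-μ_j)⁻¹ (Z^i_j ⊗ Z^j_i - Z^j_i ⊗ Z^i_j)` as an operator on ℂⁿ⊗ℂⁿ. -/
def rZero (n : ℕ) (μ : Fin n → ℂ) : Matrix (Fin n × Fin n) (Fin n × Fin n) ℂ :=
  ∑ i : Fin n, ∑ j : Fin n, if i < j then
    (μ i - μ j)⁻¹ • (Zmat n i j ⊗ₖ Zmat n j i - Zmat n j i ⊗ₖ Zmat n i j) else 0

/-!
Write `Z^i_j = (e_i - e_j) e_jᵀ`. Then `Z^i_j ⊗ Z^j_i = -((e_i - e_j) ⊗ (e_i - e_j)) (e_j ⊗ e_i)ᵀ`,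
so every column of `r₀` is a symmetric tensor, while `r₀` is antisymmetric under swapping both
tensor factors at once; hence `r₀` also changes sign under swapping the factors of its input.
An operator whose image is symmetric and which is odd under the flip kills its own image.
-/

namespace Matrix

variable {α R : Type*} [Fintype α] [Ring R] [IsAddTorsionFree R]

theorem mul_self_eq_zero_of_swap_rows_of_swap_cols (M : Matrix (α × α) (α × α) R)
    (hrow : ∀ a c y, M (a, c) y = M (c, a) y) (hcol : ∀ x b d, M x (b, d) = -M x (d, b)) :
    M * M = 0 := by
  ext x y
  rw [mul_apply, zero_apply, ← self_eq_neg, ← sum_neg_distrib]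
  refine Fintype.sum_equiv (Equiv.prodComm α α) _ _ fun ⟨b, d⟩ => ?_
  simp only [Equiv.prodComm_apply, Prod.swap_prod_mk]
  rw [hcol x b d, hrow b d y, neg_mul]

end Matrix

theorem Zmat_eq_vecMulVec (n : ℕ) (i j : Fin n) :
    Zmat n i j = vecMulVec (Pi.single i 1 - Pi.single j 1) (Pi.single j 1) := by
  rw [Zmat, single_eq_single_vecMulVec_single, single_eq_single_vecMulVec_single, sub_vecMulVec]

theorem Zmat_mul_Zmat_swap_rows (n : ℕ) (i j a b c d : Fin n) :
    Zmat n i j a b * Zmat n j i c d = Zmat n i j c b * Zmat n j i a d := by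
  simp only [Zmat_eq_vecMulVec, vecMulVec_apply, Pi.sub_apply]
  ring

theorem rZero_apply (n : ℕ) (μ : Fin n → ℂ) (x y : Fin n × Fin n) :
    rZero n μ x y = ∑ i : Fin n, ∑ j : Fin n, if i < j then (μ i - μ j)⁻¹ *
      (Zmat n i j x.1 y.1 * Zmat n j i x.2 y.2 - Zmat n j i x.1 y.1 * Zmat n i j x.2 y.2)
      else 0 := by
  simp only [rZero, Matrix.sum_apply]
  refine sum_congr rfl fun i _ => sum_congr rfl fun j _ => ?_
  split_ifs <;> simp [kroneckerMap_apply]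

theorem rZero_apply_swap_rows (n : ℕ) (μ : Fin n → ℂ) (a c : Fin n) (y : Fin n × Fin n) :
    rZero n μ (a, c) y = rZero n μ (c, a) y := by
  simp only [rZero_apply, Zmat_mul_Zmat_swap_rows n _ _ a _ c]

theorem rZero_apply_swap_both (n : ℕ) (μ : Fin n → ℂ) (a c b d : Fin n) :
    rZero n μ (c, a) (d, b) = -rZero n μ (a, c) (b, d) := by
  simp only [rZero_apply, ← sum_neg_distrib]
  refine sum_congr rfl fun i _ => sum_congr rfl fun j _ => ?_
  split_ifs
  · ring
  · simp

theorem rZero_apply_swap_cols (n : ℕ) (μ : Fin n → ℂ) (x : Fin n × Fin n) (b d : Fin n) :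
    rZero n μ x (b, d) = -rZero n μ x (d, b) := by
  rw [rZero_apply_swap_rows, rZero_apply_swap_both]

theorem rZero_sq_eq_zero_general (n : ℕ) (μ : Fin n → ℂ) :
    rZero n μ * rZero n μ = 0 :=
  (rZero n μ).mul_self_eq_zero_of_swap_rows_of_swap_cols (rZero_apply_swap_rows n μ)
    (rZero_apply_swap_cols n μ)

/-- The skew-symmetric rime r-matrix is nilpotent: `r₀² = 0`. -/
theorem rZero_sq_eq_zero (n : ℕ) (μ : Fin n → ℂ) (hd : ∀ i j, i ≠ j → μ i ≠ μ j) :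
    rZero n μ * rZero n μ = 0 :=
  rZero_sq_eq_zero_general n μ
end
end

section
/- Let φ_1,...,φ_n ∈ ℂ be nonzero and pairwise distinct, and define r := Σ_{i≠j} (1/(φ_i-φ_j)) (φ_i e^i_j - φ_j e^j_j) ⊗ (e^j_i - e^i_i) acting on ℂ^n⊗ℂ^n. Then r² = -r. -/
open Matrix Kronecker BigOperators Finset

noncomputable section


/-- The classical r-matrix `r = Σ_{i≠j} (φ_i-φ_j)⁻¹ (φ_i e^i_j - φ_j e^j_j) ⊗ (e^j_i - e^i_i)`,
viewed as an operator on ℂⁿ⊗ℂⁿ via the Kronecker product. -/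
def rPhi (n : ℕ) (φ : Fin n → ℂ) : Matrix (Fin n × Fin n) (Fin n × Fin n) ℂ :=
  ∑ i : Fin n, ∑ j : Fin n, if i ≠ j then
    (φ i - φ j)⁻¹ • ((φ i • single i j (1:ℂ) - φ j • single j j (1:ℂ)) ⊗ₖ
      (single j i (1:ℂ) - single i i (1:ℂ))) else 0

/-!
Write `Δ = φ_d - φ_c` and `w_{cd} = (φ_d e_d - φ_c e_c) ⊗ (e_c - e_d)`. Only the `(i, j) = (d, c)`
summand of `r` sees `e_c ⊗ e_d`, and it sends it to `Δ⁻¹ w_{cd}`. As `w_{dc} = w_{cd}`, this makes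
`r` vanish on `e_c ⊗ e_c` and odd under swapping the two factors of `e_c ⊗ e_d`, so expanding `w_{cd}`
gives `r w_{cd} = φ_d r(e_d ⊗ e_c) + φ_c r(e_c ⊗ e_d) = -Δ r(e_c ⊗ e_d)`. Hence
`r² (e_c ⊗ e_d) = -Δ⁻¹ Δ Δ⁻¹ w_{cd} = -r (e_c ⊗ e_d)`, since `a⁻¹ a a⁻¹ = a⁻¹`
for every `a` (with `0⁻¹ = 0`).
-/

section

variable {n : ℕ} (φ : Fin n → ℂ)

/-- `(φ_d e_d - φ_c e_c) ⊗ (e_c - e_d)`, with `e_a ⊗ e_b` written `Pi.single (a, b) 1`. -/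
def rPhiNumerator (c d : Fin n) : Fin n × Fin n → ℂ :=
  φ d • (Pi.single (d, c) 1 - Pi.single (d, d) 1) - φ c • (Pi.single (c, c) 1 - Pi.single (c, d) 1)

theorem rPhiNumerator_self (c : Fin n) : rPhiNumerator φ c c = 0 := by
  simp [rPhiNumerator]

theorem rPhiNumerator_comm (c d : Fin n) : rPhiNumerator φ d c = rPhiNumerator φ c d := by
  simp only [rPhiNumerator]
  module

theorem col_rPhi (c d : Fin n) : (rPhi n φ).col (c, d) = (φ d - φ c)⁻¹ • rPhiNumerator φ c d := by
  ext ⟨a, b⟩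
  rw [col_apply, rPhi, Matrix.sum_apply, sum_eq_single d, Matrix.sum_apply, sum_eq_single c]
  · by_cases hdc : d = c
    · subst hdc
      simp [rPhiNumerator_self]
    · simp only [ne_eq, hdc, not_false_eq_true, if_true, Matrix.smul_apply, kroneckerMap_apply,
        Matrix.sub_apply, Matrix.single_apply, rPhiNumerator, Pi.sub_apply, Pi.smul_apply,
        Pi.single_apply, Prod.mk.injEq, smul_eq_mul, and_true]
      grind
  · intro j _ hjc
    split_ifs <;> simp [kroneckerMap_apply, single_apply, hjc]
  · simp
  · intro i _ hid
    rw [Matrix.sum_apply]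
    refine sum_eq_zero fun j _ => ?_
    split_ifs <;> simp [kroneckerMap_apply, single_apply, hid]
  · simp

theorem rPhi_mulVec_single (c d : Fin n) :
    rPhi n φ *ᵥ Pi.single (c, d) 1 = (φ d - φ c)⁻¹ • rPhiNumerator φ c d := by
  rw [mulVec_single_one, col_rPhi]

theorem rPhi_mulVec_single_self (c : Fin n) : rPhi n φ *ᵥ Pi.single (c, c) 1 = 0 := by
  rw [rPhi_mulVec_single, rPhiNumerator_self, smul_zero]

theorem rPhi_mulVec_single_swap (c d : Fin n) :
    rPhi n φ *ᵥ Pi.single (d, c) 1 = -(rPhi n φ *ᵥ Pi.single (c, d) 1) := by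
  rw [rPhi_mulVec_single, rPhi_mulVec_single, rPhiNumerator_comm, ← neg_sub, inv_neg, neg_smul]

theorem rPhi_mulVec_rPhiNumerator (c d : Fin n) :
    rPhi n φ *ᵥ rPhiNumerator φ c d = (φ c - φ d) • (rPhi n φ *ᵥ Pi.single (c, d) 1) := by
  simp only [rPhiNumerator, mulVec_sub, mulVec_smul, rPhi_mulVec_single_self,
    rPhi_mulVec_single_swap φ c d]
  module

end

theorem rPhi_sq_eq_neg_general (n : ℕ) (φ : Fin n → ℂ) :
    rPhi n φ * rPhi n φ = -(rPhi n φ) := by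
  refine ext_of_mulVec_single fun ⟨c, d⟩ => ?_
  have hinv : (φ d - φ c)⁻¹ * (φ c - φ d) * (φ d - φ c)⁻¹ = -(φ d - φ c)⁻¹ := by
    rw [← neg_sub (φ d), mul_neg, neg_mul, neg_inj]
    simpa using mul_inv_mul_cancel (φ d - φ c)⁻¹
  rw [← mulVec_mulVec, rPhi_mulVec_single, mulVec_smul, rPhi_mulVec_rPhiNumerator,
    rPhi_mulVec_single, neg_mulVec, rPhi_mulVec_single, smul_smul, smul_smul, hinv, neg_smul]

/-- The non-skew-symmetric rime r-matrix is (minus-)idempotent: `r² = -r`. -/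
theorem rPhi_sq_eq_neg (n : ℕ) (φ : Fin n → ℂ)
    (h0 : ∀ i, φ i ≠ 0) (hd : ∀ i j, i ≠ j → φ i ≠ φ j) :
    rPhi n φ * rPhi n φ = -(rPhi n φ) :=
  rPhi_sq_eq_neg_general n φ
end
end

section
/- Let μ_1,...,μ_n ∈ ℂ be pairwise distinct and r_0 = Σ_{i<j} (1/(μ_i-μ_j)) (Z^i_j ⊗ Z^j_i - Z^j_i ⊗ Z^i_j) with Z^i_j = e^i_j - e^j_j. Then r_0 satisfies the associative classical Yang–Baxter equation: r_0^{13} r_0^{12} - r_0^{12} r_0^{23} + r_0^{23} r_0^{13} = 0. -/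
open Matrix Kronecker BigOperators Finset

noncomputable section


/-! The entries of `r₀` are `r₀ (a,b) (d,e) = (μ_e - μ_d)⁻¹ (δ_{ae} - δ_{ad}) (δ_{bd} - δ_{be})`,
i.e. `r₀ (v_d ⊗ v_e) = (μ_e - μ_d)⁻¹ (v_e - v_d) ⊗ (v_d - v_e)`. In each of the three products of
the equation the summation index only meets a difference `δ_{xp} - δ_{xq}`, so each product
collapses to two terms. Writing `X = v_e - v_d` and `Y = v_f - v_e`, so that `v_f - v_d = X + Y`,
the six terms add up to
`X_b Y_c (X + Y)_a ((μ_e-μ_d)⁻¹(μ_f-μ_e)⁻¹ - (μ_e-μ_d)⁻¹(μ_f-μ_d)⁻¹ - (μ_f-μ_e)⁻¹(μ_f-μ_d)⁻¹)`.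
This vanishes by partial fractions when `d, e, f` are distinct, and because `X`, `Y` or `X + Y`
is zero otherwise. -/

section RimeCoefficients

variable {ι K : Type*} [DecidableEq ι] [Field K]

def basisDiff (e d a : ι) : K := (if a = e then 1 else 0) - if a = d then 1 else 0

lemma basisDiff_self (d a : ι) : (basisDiff d d a : K) = 0 := sub_self _

def rimeCoeff (μ : ι → K) (a b d e : ι) : K :=
  (μ e - μ d)⁻¹ * basisDiff e d a * basisDiff d e b

lemma inv_sub_mul_inv_sub {x y z : K} (hxy : x ≠ y) (hyz : y ≠ z) (hxz : x ≠ z) :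
    (y - x)⁻¹ * (z - y)⁻¹ = (y - x)⁻¹ * (z - x)⁻¹ + (z - y)⁻¹ * (z - x)⁻¹ := by
  have := sub_ne_zero.2 hxy.symm
  have := sub_ne_zero.2 hyz.symm
  have := sub_ne_zero.2 hxz.symm
  field_simp
  ring

variable [Fintype ι]

lemma sum_mul_basisDiff (G : ι → K) (e d : ι) : ∑ x, G x * basisDiff e d x = G e - G d := by
  simp [basisDiff, mul_sub, Finset.sum_sub_distrib]

lemma sum_mul_rimeCoeff_fst (μ G : ι → K) (b d e : ι) :
    ∑ x, G x * rimeCoeff μ x b d e = (G e - G d) * ((μ e - μ d)⁻¹ * basisDiff d e b) := by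
  rw [← sum_mul_basisDiff, Finset.sum_mul]
  exact Finset.sum_congr rfl fun x _ => by simp only [rimeCoeff]; ring

lemma sum_mul_rimeCoeff_snd (μ G : ι → K) (a d e : ι) :
    ∑ x, G x * rimeCoeff μ a x d e = (G d - G e) * ((μ e - μ d)⁻¹ * basisDiff e d a) := by
  rw [← sum_mul_basisDiff, Finset.sum_mul]
  exact Finset.sum_congr rfl fun x _ => by simp only [rimeCoeff, basisDiff]; ring

theorem rimeCoeff_acYB {μ : ι → K} (hμ : Function.Injective μ) (a b c d e f : ι) :
    (∑ x, rimeCoeff μ a c x f * rimeCoeff μ x b d e)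
      - (∑ x, rimeCoeff μ a b d x * rimeCoeff μ x c e f)
      + (∑ x, rimeCoeff μ b c e x * rimeCoeff μ a x d f) = 0 := by
  rw [sum_mul_rimeCoeff_fst, sum_mul_rimeCoeff_fst, sum_mul_rimeCoeff_snd]
  calc _ = basisDiff e d b * basisDiff f e c * basisDiff f d a *
        ((μ e - μ d)⁻¹ * (μ f - μ e)⁻¹ - (μ e - μ d)⁻¹ * (μ f - μ d)⁻¹
          - (μ f - μ e)⁻¹ * (μ f - μ d)⁻¹) := by
        simp only [rimeCoeff, basisDiff]
        rw [← neg_sub (μ e) (μ d), inv_neg]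
        ring
    _ = 0 := by
      by_cases hde : d = e
      · simp [hde, basisDiff_self]
      by_cases hef : e = f
      · simp [hef, basisDiff_self]
      by_cases hdf : d = f
      · simp [hdf, basisDiff_self]
      rw [inv_sub_mul_inv_sub (hμ.ne hde) (hμ.ne hef) (hμ.ne hdf)]
      ring

end RimeCoefficients

lemma Finset.sum_sum_ite_lt_add_swap {ι M : Type*} [Fintype ι] [LinearOrder ι] [AddCommMonoid M]
    (F : ι → ι → M) (hF : ∀ i, F i i = 0) :
    ∑ i, ∑ j, (if i < j then F i j + F j i else 0) = ∑ i, ∑ j, F i j := by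
  have hsplit : ∀ i j, F i j = (if i < j then F i j else 0) + if j < i then F i j else 0 := by
    intro i j
    rcases lt_trichotomy i j with h | rfl | h
    · simp [h, h.not_gt]
    · simp [hF]
    · simp [h, h.not_gt]
  calc _ = (∑ i, ∑ j, if i < j then F i j else 0) + ∑ i, ∑ j, if i < j then F j i else 0 := by
        simp_rw [ite_add_zero, Finset.sum_add_distrib]
    _ = (∑ i, ∑ j, if i < j then F i j else 0) + ∑ i, ∑ j, if j < i then F i j else 0 := by
        rw [Finset.sum_comm (f := fun i j => if i < j then F j i else 0)]
    _ = ∑ i, ∑ j, F i j := by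
        simp_rw [← Finset.sum_add_distrib, ← hsplit]

lemma Zmat_apply {n : ℕ} (i j a d : Fin n) :
    Zmat n i j a d = if d = j then basisDiff i j a else 0 := by
  by_cases hd : d = j
  · simp [Zmat, Matrix.single_apply, basisDiff, hd, eq_comm]
  · simp [Zmat, hd, Ne.symm hd]

lemma Zmat_self {n : ℕ} (i : Fin n) : Zmat n i i = 0 := sub_self _

lemma rZero_eq_sum (n : ℕ) (μ : Fin n → ℂ) :
    rZero n μ = ∑ i, ∑ j, (μ i - μ j)⁻¹ • (Zmat n i j ⊗ₖ Zmat n j i) := by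
  rw [← Finset.sum_sum_ite_lt_add_swap _ fun i => by simp [Zmat_self]]
  refine Finset.sum_congr rfl fun i _ => Finset.sum_congr rfl fun j _ => ?_
  rw [smul_sub, sub_eq_add_neg, ← neg_smul, ← inv_neg, neg_sub]

lemma rZero_apply_s9 (n : ℕ) (μ : Fin n → ℂ) (a b d e : Fin n) :
    rZero n μ (a, b) (d, e) = rimeCoeff μ a b d e := by
  simp only [rZero_eq_sum, Matrix.sum_apply, Matrix.smul_apply, kroneckerMap_apply, Zmat_apply,
    smul_eq_mul, mul_ite, ite_mul, mul_zero, zero_mul]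
  simp [Finset.sum_ite_eq, rimeCoeff, mul_assoc]

section TripleProducts

variable {n : ℕ} (r s : Matrix (Fin n × Fin n) (Fin n × Fin n) ℂ) (a b c d e f : Fin n)

lemma op13_mul_op12_apply :
    (op13 n r * op12 n s) (a, b, c) (d, e, f) = ∑ x, r (a, c) (x, f) * s (x, b) (d, e) := by
  simp [mul_apply, op13, op12, Fintype.sum_prod_type]

lemma op12_mul_op23_apply :
    (op12 n r * op23 n s) (a, b, c) (d, e, f) = ∑ x, r (a, b) (d, x) * s (x, c) (e, f) := by
  simp [mul_apply, op12, op23, Fintype.sum_prod_type]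

lemma op23_mul_op13_apply :
    (op23 n r * op13 n s) (a, b, c) (d, e, f) = ∑ x, r (b, c) (e, x) * s (a, x) (d, f) := by
  simp [mul_apply, op23, op13, Fintype.sum_prod_type]

end TripleProducts

/-- `r₀` satisfies the associative classical Yang–Baxter equation
`r₀¹³ r₀¹² - r₀¹² r₀²³ + r₀²³ r₀¹³ = 0`. -/
theorem rZero_acYB (n : ℕ) (μ : Fin n → ℂ) (hd : ∀ i j, i ≠ j → μ i ≠ μ j) :
    op13 n (rZero n μ) * op12 n (rZero n μ) - op12 n (rZero n μ) * op23 n (rZero n μ)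
      + op23 n (rZero n μ) * op13 n (rZero n μ) = 0 := by
  ext ⟨a, b, c⟩ ⟨d, e, f⟩
  rw [Matrix.add_apply, Matrix.sub_apply, op13_mul_op12_apply, op12_mul_op23_apply,
    op23_mul_op13_apply]
  simp only [rZero_apply_s9]
  exact rimeCoeff_acYB (fun i j => not_imp_not.mp (hd i j)) a b c d e f
end
end

section
/- Let φ_1,...,φ_n ∈ ℂ be nonzero and pairwise distinct, and r = Σ_{i≠j} (1/(φ_i-φ_j)) (φ_i e^i_j - φ_j e^j_j) ⊗ (e^j_i - e^i_i). Then r + r_{21} = P - Id, where r_{21} is r with the two tensor factors swapped and P is the permutation (flip) operator on ℂ^n⊗ℂ^n. -/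
open Matrix Kronecker BigOperators Finset

noncomputable section


/-- The flip (permutation) operator `P(x⊗y) = y⊗x` on ℂⁿ⊗ℂⁿ. -/
def flipP (n : ℕ) : Matrix (Fin n × Fin n) (Fin n × Fin n) ℂ := fun p q =>
  if p.1 = q.2 ∧ p.2 = q.1 then 1 else 0

/-- For `r = Σ aₛ ⊗ bₛ`, the element `r₂₁ = Σ bₛ ⊗ aₛ`, i.e. the matrix with the two tensor
factors swapped. -/
def swap21 {n : ℕ} (r : Matrix (Fin n × Fin n) (Fin n × Fin n) ℂ) :
    Matrix (Fin n × Fin n) (Fin n × Fin n) ℂ := fun p q => r (p.2, p.1) (q.2, q.1)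

/-!
Pair the `(i, j)` summand of `r` with the flipped `(j, i)` summand of `r₂₁`. Both are built from
`e^i_j ⊗ e^j_i`, `e^i_j ⊗ e^i_i`, `e^j_j ⊗ e^j_i` and `e^j_j ⊗ e^i_i`, and since
`φ_i / (φ_i - φ_j) + φ_j / (φ_j - φ_i) = 1` the pair collapses to `e^i_j ⊗ e^j_i - e^j_j ⊗ e^i_i`.
Summed over `i ≠ j` (the diagonal terms would vanish anyway) this is `P - Id`, because
`P = Σ e^i_j ⊗ e^j_i` and `Id = Σ e^j_j ⊗ e^i_i`.
-/

namespace Matrix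

variable {R l m n p : Type*}

theorem sub_kronecker [NonUnitalNonAssocRing R] (A₁ A₂ : Matrix l m R) (B : Matrix n p R) :
    (A₁ - A₂) ⊗ₖ B = A₁ ⊗ₖ B - A₂ ⊗ₖ B := by
  ext ⟨i, k⟩ ⟨j, k'⟩
  exact sub_mul _ _ _

theorem kronecker_sub [NonUnitalNonAssocRing R] (A : Matrix l m R) (B₁ B₂ : Matrix n p R) :
    A ⊗ₖ (B₁ - B₂) = A ⊗ₖ B₁ - A ⊗ₖ B₂ := by
  ext ⟨i, k⟩ ⟨j, k'⟩
  exact mul_sub _ _ _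

theorem kronecker_reindex_prodComm [CommMagma R] (A : Matrix l m R) (B : Matrix n p R) :
    reindex (Equiv.prodComm l n) (Equiv.prodComm m p) (A ⊗ₖ B) = B ⊗ₖ A := by
  ext ⟨i, k⟩ ⟨j, k'⟩
  exact mul_comm _ _

theorem one_eq_sum_single_kronecker_single [Semiring R] [Fintype n] [DecidableEq n] :
    (1 : Matrix (n × n) (n × n) R) = ∑ i, ∑ j, single j j 1 ⊗ₖ single i i 1 := by
  simp only [single_kronecker_single, mul_one]
  rw [Finset.sum_comm, ← Fintype.sum_prod_type', sum_single_one]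

end Matrix

section Summand

variable {K ι : Type*} [Field K] [DecidableEq ι]

def rSummand (a b : K) (i j : ι) : Matrix (ι × ι) (ι × ι) K :=
  (a - b)⁻¹ • ((a • single i j 1 - b • single j j 1) ⊗ₖ (single j i 1 - single i i 1))

theorem rSummand_add_reindex_rSummand {a b : K} (hab : a ≠ b) (i j : ι) :
    rSummand a b i j + reindex (Equiv.prodComm ι ι) (Equiv.prodComm ι ι) (rSummand b a j i) =
      single i j 1 ⊗ₖ single j i 1 - single j j 1 ⊗ₖ single i i 1 := by
  have hc : (a - b)⁻¹ * (a - b) = 1 := inv_mul_cancel₀ (sub_ne_zero.mpr hab)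
  rw [rSummand, rSummand, ← coe_reindexLinearEquiv K, map_smul, coe_reindexLinearEquiv,
    kronecker_reindex_prodComm, ← neg_sub a b, inv_neg]
  simp only [sub_kronecker, kronecker_sub, smul_kronecker, kronecker_smul]
  linear_combination (norm := module)
    hc • (single i j (1 : K) ⊗ₖ single j i 1 - single j j 1 ⊗ₖ single i i 1)

end Summand

theorem flipP_eq_sum (n : ℕ) : flipP n = ∑ i, ∑ j, single i j 1 ⊗ₖ single j i 1 := by
  ext ⟨a, b⟩ ⟨c, d⟩
  simp only [single_kronecker_single, mul_one, Matrix.sum_apply, single_apply, eq_comm,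
    Prod.mk.injEq, ite_and, sum_ite_irrel, sum_ite_eq, mem_univ, ↓reduceIte, sum_const_zero]
  rw [flipP, ← ite_and]
  exact if_congr and_comm rfl rfl

theorem flipP_sub_one_eq_sum (n : ℕ) :
    flipP n - 1 = ∑ i, ∑ j, if i ≠ j then
      single i j 1 ⊗ₖ single j i 1 - single j j 1 ⊗ₖ single i i 1 else 0 := by
  rw [flipP_eq_sum, one_eq_sum_single_kronecker_single, ← sum_sub_distrib]
  refine sum_congr rfl fun i _ => ?_
  rw [← sum_sub_distrib]
  refine sum_congr rfl fun j _ => ?_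
  rw [eq_comm, ite_eq_left_iff, not_not]
  rintro rfl
  exact (sub_self _).symm

theorem rPhi_add_swap_general (n : ℕ) (φ : Fin n → ℂ)
    (hd : ∀ i j, i ≠ j → φ i ≠ φ j) :
    rPhi n φ + swap21 (rPhi n φ) = flipP n - 1 := by
  have hr : rPhi n φ = ∑ i, ∑ j, if i ≠ j then rSummand (φ i) (φ j) i j else 0 := rfl
  have hswap : swap21 (rPhi n φ) =
      ∑ i, ∑ j, if i ≠ j then
        reindex (.prodComm _ _) (.prodComm _ _) (rSummand (φ j) (φ i) j i) else 0 := by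
    change reindexLinearEquiv ℂ ℂ (.prodComm _ _) (.prodComm _ _) (rPhi n φ) = _
    rw [hr, sum_comm]
    simp only [map_sum, apply_ite, map_zero, coe_reindexLinearEquiv, ne_comm]
  rw [flipP_sub_one_eq_sum, hswap, hr, ← sum_add_distrib]
  refine sum_congr rfl fun i _ => ?_
  rw [← sum_add_distrib]
  refine sum_congr rfl fun j _ => ?_
  split_ifs with hij
  · exact rSummand_add_reindex_rSummand (hd i j hij) i j
  · exact add_zero 0

/-- `r + r₂₁ = P - Id` for the rime r-matrix. -/
theorem rPhi_add_swap (n : ℕ) (φ : Fin n → ℂ)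
    (h0 : ∀ i, φ i ≠ 0) (hd : ∀ i j, i ≠ j → φ i ≠ φ j) :
    rPhi n φ + swap21 (rPhi n φ) = flipP n - 1 :=
  rPhi_add_swap_general n φ hd
end
end

section
/- In any associative ℂ-algebra, suppose elements r_{12}, r_{13}, r_{23} satisfy r_{12}r_{13} - r_{23}r_{12} + r_{13}r_{23} = ξ r_{13}, r_{13}r_{12} - r_{12}r_{23} + r_{23}r_{13} = ξ r_{13}, and r_{12}² = ξ r_{12} + η, r_{13}² = ξ r_{13} + η, r_{23}² = ξ r_{23} + η, for some constants ξ, η ∈ ℂ. Then r_{12} r_{23} r_{12} = r_{23} r_{12} r_{23}. -/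
/-- In an associative ℂ-algebra, the non-homogeneous acYB relations in both orders together
with the Hecke conditions imply the braid relation `r₁₂ r₂₃ r₁₂ = r₂₃ r₁₂ r₂₃`. -/
theorem braid_from_acYB_hecke {A : Type*} [Ring A] [Algebra ℂ A]
    (r12 r13 r23 : A) (ξ η : ℂ)
    (h1 : r12 * r13 - r23 * r12 + r13 * r23 = ξ • r13)
    (h2 : r13 * r12 - r12 * r23 + r23 * r13 = ξ • r13)
    (h12 : r12 * r12 = ξ • r12 + algebraMap ℂ A η)
    (h13 : r13 * r13 = ξ • r13 + algebraMap ℂ A η)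
    (h23 : r23 * r23 = ξ • r23 + algebraMap ℂ A η) :
    r12 * r23 * r12 = r23 * r12 * r23 := by
  simp only [Algebra.smul_def] at h1 h12 h23
  have comm : algebraMap ℂ A η * r13 = r13 * algebraMap ℂ A η := Algebra.commutes η r13
  have E : r12 * (r12 * r13 - r23 * r12 + r13 * r23)
        - (r12 * r13 - r23 * r12 + r13 * r23) * r23
        - (r12 * r12) * r13 + r13 * (r23 * r23)
      = r12 * (algebraMap ℂ A ξ * r13) - (algebraMap ℂ A ξ * r13) * r23
        - (algebraMap ℂ A ξ * r12 + algebraMap ℂ A η) * r13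
        + r13 * (algebraMap ℂ A ξ * r23 + algebraMap ℂ A η) := by
    rw [h1, h12, h23]
  have cxa : r12 * (algebraMap ℂ A ξ * r13) = algebraMap ℂ A ξ * (r12 * r13) := by
    rw [← mul_assoc, ← Algebra.commutes ξ r12, mul_assoc]
  have cxb : r13 * (algebraMap ℂ A ξ * r23) = algebraMap ℂ A ξ * (r13 * r23) := by
    rw [← mul_assoc, ← Algebra.commutes ξ r13, mul_assoc]
  have cxb' : r13 * (algebraMap ℂ A ξ * r23 + algebraMap ℂ A η)
      = algebraMap ℂ A ξ * (r13 * r23) + r13 * algebraMap ℂ A η := by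
    rw [mul_add, cxb]
  rw [cxa, cxb'] at E
  have lhs_eq : r12 * (r12 * r13 - r23 * r12 + r13 * r23)
        - (r12 * r13 - r23 * r12 + r13 * r23) * r23
        - (r12 * r12) * r13 + r13 * (r23 * r23)
      = r23 * r12 * r23 - r12 * r23 * r12 := by noncomm_ring
  have rhs_eq : algebraMap ℂ A ξ * (r12 * r13) - (algebraMap ℂ A ξ * r13) * r23
        - (algebraMap ℂ A ξ * r12 + algebraMap ℂ A η) * r13
        + (algebraMap ℂ A ξ * (r13 * r23) + r13 * algebraMap ℂ A η)
      = r13 * algebraMap ℂ A η - algebraMap ℂ A η * r13 := by noncomm_ring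
  rw [lhs_eq, rhs_eq, ← comm, sub_self] at E
  exact (sub_eq_zero.mp E).symm
end

section
/- In any associative ℂ-algebra, suppose elements r_{12}, r_{13}, r_{23} satisfy r_{12}r_{13} - r_{23}r_{12} + r_{13}r_{23} = ξ r_{13}, r_{13}r_{12} - r_{12}r_{23} + r_{23}r_{13} = ξ r_{13}, and r_{ij}² = ξ r_{ij} + η for each of the three elements, for constants ξ, η ∈ ℂ. Then r_{12} r_{13} r_{23} = r_{23} r_{13} r_{12}. -/
/-- In an associative ℂ-algebra, the non-homogeneous acYB relations in both orders together
with the Hecke conditions imply the quantum Yang–Baxter relation `r₁₂ r₁₃ r₂₃ = r₂₃ r₁₃ r₁₂`. -/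
theorem qYB_from_acYB_hecke {A : Type*} [Ring A] [Algebra ℂ A]
    (r12 r13 r23 : A) (ξ η : ℂ)
    (h1 : r12 * r13 - r23 * r12 + r13 * r23 = ξ • r13)
    (h2 : r13 * r12 - r12 * r23 + r23 * r13 = ξ • r13)
    (h12 : r12 * r12 = ξ • r12 + algebraMap ℂ A η)
    (h13 : r13 * r13 = ξ • r13 + algebraMap ℂ A η)
    (h23 : r23 * r23 = ξ • r23 + algebraMap ℂ A η) :
    r12 * r13 * r23 = r23 * r13 * r12 := by
  linear_combination (norm := noncomm_ring) h1 * r23 - r23 * h2 - r13 * h23 + h23 * r13 + Algebra.commutes η r13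
end

section
/- Let β ∈ ℂ, β ≠ 2, let φ_1,...,φ_n be nonzero pairwise distinct complex numbers, and let R̂ be the rime Yang–Baxter solution with β_{ij} = βφ_i/(φ_i-φ_j). Then the eigenvalue 1 of R̂ has multiplicity n(n+1)/2 and the eigenvalue β-1 has multiplicity n(n-1)/2; equivalently, (R̂ - Id)(R̂ - (β-1)Id) = 0 with trace(R̂) = n(n+1)/2 + (β-1)·n(n-1)/2. -/
open Matrix Kronecker BigOperators Finset

noncomputable section

lemma sum_row (n : ℕ) (b : Fin n → Fin n → ℂ) (i j : Fin n) (f : Fin n × Fin n → ℂ) :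
    ∑ q : Fin n × Fin n, rimeR n b (i,j) q * f q
    = (1 - b j i) * f (j,i) + b i j * f (i,j) - b i j * f (i,i) + b j i * f (j,j) := by
  rw [Fintype.sum_prod_type]
  simp only [rimeR, add_mul, sub_mul, mul_ite, ite_mul, mul_zero, zero_mul, mul_one, one_mul,
    Finset.sum_add_distrib, Finset.sum_sub_distrib, Finset.sum_ite_eq, Finset.sum_ite_eq',
    Finset.mem_univ, if_true]
  simp

lemma hecke (n : ℕ) (b : Fin n → Fin n → ℂ) (β : ℂ) (hb0 : ∀ i, b i i = 0)
    (hbs : ∀ i j, i ≠ j → b i j + b j i = β) :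
    rimeR n b * rimeR n b = β • rimeR n b + (1 - β) • (1 : Matrix (Fin n × Fin n) (Fin n × Fin n) ℂ) := by
  ext ⟨i, j⟩ ⟨k, l⟩
  rw [Matrix.mul_apply]
  rw [show (∑ q : Fin n × Fin n, rimeR n b (i,j) q * rimeR n b q (k,l))
      = (1 - b j i) * rimeR n b (j,i) (k,l) + b i j * rimeR n b (i,j) (k,l)
        - b i j * rimeR n b (i,i) (k,l) + b j i * rimeR n b (j,j) (k,l)
      from sum_row n b i j _]
  simp only [Matrix.add_apply, Matrix.smul_apply, Matrix.one_apply, smul_eq_mul, rimeR,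
    Prod.mk.injEq, ite_and, hb0]
  rcases eq_or_ne i j with rfl | hij
  · simp [hb0]
    split_ifs <;> first | ring | omega | tauto
  · have hji : b j i = β - b i j := by
      have := hbs i j hij; linear_combination this
    rw [hji]
    have hij' : ¬ (j = i) := fun h => hij h.symm
    try simp only [hij, hij', if_false]
    split_ifs <;> first | ring | omega | tauto

lemma trace_rime (n : ℕ) (b : Fin n → Fin n → ℂ) (β : ℂ) (hb0 : ∀ i, b i i = 0)
    (hbs : ∀ i j, i ≠ j → b i j + b j i = β) :
    Matrix.trace (rimeR n b) = (n : ℂ) + β * ((n : ℂ) * ((n : ℂ) - 1) / 2) := by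
  have hdiag : ∀ p : Fin n × Fin n, rimeR n b p p
      = b p.1 p.2 + (if p.1 = p.2 then 1 else 0) := by
    rintro ⟨i, j⟩
    rcases eq_or_ne i j with rfl | hij
    · simp [rimeR, hb0]
    · simp [rimeR, hij, Ne.symm hij]
  have hS : (∑ i : Fin n, ∑ j : Fin n, b i j) + (∑ i : Fin n, ∑ j : Fin n, b i j)
      = β * ((n : ℂ) * ((n : ℂ) - 1)) := by
    nth_rewrite 1 [show (∑ i : Fin n, ∑ j : Fin n, b i j) = ∑ i : Fin n, ∑ j : Fin n, b j i
      from Finset.sum_comm]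
    rw [← Finset.sum_add_distrib]
    have key : ∀ i : Fin n, (∑ j : Fin n, b j i) + (∑ j : Fin n, b i j)
        = ((n : ℂ) - 1) * β := by
      intro i
      rw [← Finset.sum_add_distrib]
      rw [show (∑ j : Fin n, (b j i + b i j))
          = ∑ j : Fin n, (β - if i = j then β else 0) from
        Finset.sum_congr rfl fun j _ => by
          rcases eq_or_ne i j with rfl | hij
          · simp [hb0]
          · rw [if_neg hij]; linear_combination hbs i j hij]
      simp [Finset.sum_sub_distrib, Finset.sum_ite_eq, Finset.card_univ]
      ring
    simp only [key, Finset.sum_const, Finset.card_univ, Fintype.card_fin, nsmul_eq_mul]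
    ring
  rw [Matrix.trace, Fintype.sum_prod_type]
  simp only [Matrix.diag_apply, hdiag]
  simp only [Finset.sum_add_distrib, Finset.sum_ite_eq, Finset.mem_univ, if_true,
    Finset.sum_const, Finset.card_univ, Fintype.card_fin, nsmul_eq_mul, mul_one]
  linear_combination hS / 2

/-- For `β ≠ 2` the rime R-matrix is of GL-type: eigenvalue `1` has multiplicity `n(n+1)/2`
and eigenvalue `β-1` has multiplicity `n(n-1)/2`; equivalently
`(R̂ - Id)(R̂ - (β-1)Id) = 0` and `tr R̂ = n(n+1)/2 + (β-1)·n(n-1)/2`. -/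
theorem rime_gl_type (n : ℕ) (β : ℂ) (hβ : β ≠ 2) (φ : Fin n → ℂ)
    (h0 : ∀ i, φ i ≠ 0) (hd : ∀ i j, i ≠ j → φ i ≠ φ j) :
    (rimeR n (bphi n β φ) - 1) * (rimeR n (bphi n β φ) - (β - 1) • 1) = 0
    ∧ Matrix.trace (rimeR n (bphi n β φ))
        = (n : ℂ) * ((n : ℂ) + 1) / 2 + (β - 1) * ((n : ℂ) * ((n : ℂ) - 1) / 2) := by
  have hb0 : ∀ i, bphi n β φ i i = 0 := fun i => by simp [bphi]
  have hbs : ∀ i j, i ≠ j → bphi n β φ i j + bphi n β φ j i = β := by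
    intro i j h
    have h1 : φ i - φ j ≠ 0 := sub_ne_zero.mpr (hd i j h)
    have h2 : φ j - φ i ≠ 0 := sub_ne_zero.mpr (hd j i (Ne.symm h))
    simp only [bphi]
    rw [if_neg h, if_neg (Ne.symm h)]
    field_simp
    ring
  constructor
  · have H := hecke n _ β hb0 hbs
    have e : (rimeR n (bphi n β φ) - 1) * (rimeR n (bphi n β φ) - (β - 1) • 1)
        = rimeR n (bphi n β φ) * rimeR n (bphi n β φ)
          - (β - 1) • rimeR n (bphi n β φ) - rimeR n (bphi n β φ) + (β - 1) • 1 := by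
      simp only [sub_mul, mul_sub, Matrix.one_mul, Matrix.mul_one, Matrix.mul_smul]
      abel
    rw [e, H]
    module
  · rw [trace_rime n _ β hb0 hbs]
    ring
end
end
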